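/- Let I = ℝ/ℤ and suppose x: I × [0,T] → ℝ² is smooth with |x_ρ(ρ,t)| > 0 everywhere. Define τ = x_ρ/|x_ρ|, ν = τ^⊥ (rotation by π/2), curvature κ by τ_ρ = κ ν |x_ρ|, normal velocity v = x_t·ν and tangential velocity ψ = x_t·τ. Then for every t and every η ∈ H¹(I) and w ∈ C¹(I × [0,T]): d/dt ∫_I |x_ρ| w η dρ = ∫_I |x_ρ| w_t η dρ - ∫_I ψ w_ρ η dρ - ∫_I ψ w η_ρ dρ - ∫_I κ v w η |x_ρ| dρ. -/

import Mathlib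

open RealInnerProductSpace intervalIntegral

local notation "E" => EuclideanSpace ℝ (Fin 2)

/-- Counter-clockwise rotation by `π/2` in the plane. -/
noncomputable def perp12 (v : EuclideanSpace ℝ (Fin 2)) : EuclideanSpace ℝ (Fin 2) :=
  (WithLp.equiv 2 (Fin 2 → ℝ)).symm ![-(v 1), v 0]

section aux

variable {F : Type*} [NormedAddCommGroup F] [NormedSpace ℝ F]

lemma aux_hasDerivAt_fst {u : ℝ × ℝ → F} {s ρ : ℝ} (h : DifferentiableAt ℝ u (s, ρ)) :
    HasDerivAt (fun r => u (r, ρ)) (fderiv ℝ u (s, ρ) (1, 0)) s :=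
  h.hasFDerivAt.comp_hasDerivAt s ((hasDerivAt_id s).prodMk (hasDerivAt_const s ρ))

lemma aux_hasDerivAt_snd {u : ℝ × ℝ → F} {s ρ : ℝ} (h : DifferentiableAt ℝ u (s, ρ)) :
    HasDerivAt (fun r => u (s, r)) (fderiv ℝ u (s, ρ) (0, 1)) ρ :=
  h.hasFDerivAt.comp_hasDerivAt ρ ((hasDerivAt_const ρ s).prodMk (hasDerivAt_id ρ))

lemma aux_deriv_periodic {f : ℝ → F} (hper : ∀ r, f (r + 1) = f r) :
    deriv f 1 = deriv f 0 := by
  have h : (fun r => f (r + 1)) = f := funext hper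
  have h2 := deriv_comp_add_const f 1 0
  rw [h] at h2
  simpa using h2.symm

end aux

section aux2

variable {F : Type*} [NormedAddCommGroup F] [InnerProductSpace ℝ F]

lemma aux_hasDerivAt_norm {f : ℝ → F} {f' : F} {s : ℝ}
    (h : HasDerivAt f f' s) (hne : f s ≠ 0) :
    HasDerivAt (fun r => ‖f r‖) (⟪f s, f'⟫ / ‖f s‖) s := by
  have h1 : HasDerivAt (fun r => ⟪f r, f r⟫) (⟪f s, f'⟫ + ⟪f', f s⟫) s :=
    HasDerivAt.inner ℝ h h
  have h0 : (⟪f s, f s⟫ : ℝ) ≠ 0 := inner_self_ne_zero.2 hne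
  have h2 := h1.sqrt h0
  have key : (fun r => Real.sqrt ⟪f r, f r⟫) = fun r => ‖f r‖ := by
    funext r
    rw [real_inner_self_eq_norm_sq, Real.sqrt_sq (norm_nonneg _)]
  rw [key] at h2
  convert h2 using 1
  rw [real_inner_self_eq_norm_sq, Real.sqrt_sq (norm_nonneg _), real_inner_comm f' (f s)]
  ring

end aux2

/-- Transport identity: for a smooth evolving closed curve `x` with unit tangent `τ`,
normal `ν = τ^⊥`, curvature `κ` (via `τ_ρ = κ ν |x_ρ|`), normal velocity `v = x_t·ν`
and tangential velocity `ψ = x_t·τ`, and any `η ∈ H¹(I)`, `w ∈ C¹(I × [0,T])`: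
`d/dt ∫ |x_ρ| w η = ∫ |x_ρ| w_t η - ∫ ψ w_ρ η - ∫ ψ w η_ρ - ∫ κ v w η |x_ρ|`. -/
theorem stmt_12 (T : ℝ) (hT : 0 < T) (x : ℝ → ℝ → E) (w : ℝ → ℝ → ℝ) (η : ℝ → ℝ)
    (κ : ℝ → ℝ → ℝ)
    (hx : ContDiff ℝ (⊤ : ℕ∞) (Function.uncurry x))
    (hw : ContDiff ℝ 1 (Function.uncurry w))
    (hη : ContDiff ℝ 1 η)
    (hxper : ∀ t ρ, x t (ρ + 1) = x t ρ)
    (hwper : ∀ t ρ, w t (ρ + 1) = w t ρ)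
    (hηper : Function.Periodic η 1)
    (hreg : ∀ t ρ, deriv (x t) ρ ≠ 0)
    (τ : ℝ → ℝ → E) (hτ : ∀ t ρ, τ t ρ = ‖deriv (x t) ρ‖⁻¹ • deriv (x t) ρ)
    (ν : ℝ → ℝ → E) (hν : ∀ t ρ, ν t ρ = perp12 (τ t ρ))
    (hκ : ∀ t ρ, deriv (fun r => τ t r) ρ = (κ t ρ * ‖deriv (x t) ρ‖) • ν t ρ) :
    ∀ t ∈ Set.Icc 0 T,
      HasDerivAt (fun s => ∫ ρ in (0:ℝ)..1, ‖deriv (x s) ρ‖ * w s ρ * η ρ)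
        ((∫ ρ in (0:ℝ)..1, ‖deriv (x t) ρ‖ * deriv (fun s => w s ρ) t * η ρ)
          - (∫ ρ in (0:ℝ)..1,
              ⟪deriv (fun s => x s ρ) t, τ t ρ⟫ * deriv (w t) ρ * η ρ)
          - (∫ ρ in (0:ℝ)..1,
              ⟪deriv (fun s => x s ρ) t, τ t ρ⟫ * w t ρ * deriv η ρ)
          - (∫ ρ in (0:ℝ)..1,
              κ t ρ * ⟪deriv (fun s => x s ρ) t, ν t ρ⟫ * w t ρ * η ρ *
                ‖deriv (x t) ρ‖)) t := by
  intro t ht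
  set u : ℝ × ℝ → E := Function.uncurry x with hu
  have hud : Differentiable ℝ u := hx.differentiable (by simp)
  have hufd : ContDiff ℝ (⊤ : ℕ∞) (fderiv ℝ u) := hx.fderiv_right (by simp)
  -- second-variable partial derivative of x
  set F2 : ℝ × ℝ → E := fun p => fderiv ℝ u p ((0 : ℝ), (1 : ℝ)) with hF2def
  set F1 : ℝ × ℝ → E := fun p => fderiv ℝ u p ((1 : ℝ), (0 : ℝ)) with hF1def
  have hF2 : ContDiff ℝ (⊤ : ℕ∞) F2 := hufd.clm_apply contDiff_const
  have hF1 : ContDiff ℝ (⊤ : ℕ∞) F1 := hufd.clm_apply contDiff_const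
  have hX₂ : ∀ s ρ, HasDerivAt (x s) (F2 (s, ρ)) ρ := fun s ρ =>
    aux_hasDerivAt_snd (hud (s, ρ))
  have hX₁ : ∀ s ρ, HasDerivAt (fun r => x r ρ) (F1 (s, ρ)) s := fun s ρ =>
    aux_hasDerivAt_fst (hud (s, ρ))
  have hX₂eq : ∀ s ρ, deriv (x s) ρ = F2 (s, ρ) := fun s ρ => (hX₂ s ρ).deriv
  have hX₁eq : ∀ s ρ, deriv (fun r => x r ρ) s = F1 (s, ρ) := fun s ρ => (hX₁ s ρ).deriv
  have hne : ∀ s ρ, F2 (s, ρ) ≠ 0 := fun s ρ => hX₂eq s ρ ▸ hreg s ρ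
  -- mixed second derivative
  set Y : ℝ × ℝ → E := fun p => fderiv ℝ F2 p ((1 : ℝ), (0 : ℝ)) with hYdef
  have hY : ∀ s ρ, HasDerivAt (fun r => F2 (r, ρ)) (Y (s, ρ)) s := fun s ρ =>
    aux_hasDerivAt_fst ((hF2.differentiable (by simp)) (s, ρ))
  have cYc : ContDiff ℝ (⊤ : ℕ∞) Y := (hF2.fderiv_right (by simp)).clm_apply contDiff_const
  have cY : Continuous Y := cYc.continuous
  -- symmetry of second derivatives
  have hZ : ∀ ρ, HasDerivAt (fun r => F1 (t, r)) (Y (t, ρ)) ρ := by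
    intro ρ
    have h1 := aux_hasDerivAt_snd ((hF1.differentiable (by simp)) (t, ρ))
    have hsnd : HasFDerivAt (fderiv ℝ u) (fderiv ℝ (fderiv ℝ u) (t, ρ)) (t, ρ) :=
      ((hufd.differentiable (by simp)) (t, ρ)).hasFDerivAt
    have e1 : HasFDerivAt F1
        ((ContinuousLinearMap.apply ℝ E ((1 : ℝ), (0 : ℝ))).comp
          (fderiv ℝ (fderiv ℝ u) (t, ρ))) (t, ρ) :=
      (ContinuousLinearMap.apply ℝ E ((1 : ℝ), (0 : ℝ))).hasFDerivAt.comp (t, ρ) hsnd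
    have e2 : HasFDerivAt F2
        ((ContinuousLinearMap.apply ℝ E ((0 : ℝ), (1 : ℝ))).comp
          (fderiv ℝ (fderiv ℝ u) (t, ρ))) (t, ρ) :=
      (ContinuousLinearMap.apply ℝ E ((0 : ℝ), (1 : ℝ))).hasFDerivAt.comp (t, ρ) hsnd
    have hsymm := second_derivative_symmetric (f := u) (f' := fderiv ℝ u)
      (fun y => (hud y).hasFDerivAt) hsnd ((0 : ℝ), (1 : ℝ)) ((1 : ℝ), (0 : ℝ))
    have : fderiv ℝ F1 (t, ρ) ((0 : ℝ), (1 : ℝ)) = Y (t, ρ) := by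
      show fderiv ℝ F1 (t, ρ) ((0 : ℝ), (1 : ℝ)) = fderiv ℝ F2 (t, ρ) ((1 : ℝ), (0 : ℝ))
      rw [e1.fderiv, e2.fderiv]
      simpa using hsymm
    rw [← this]
    exact h1
  -- partial derivatives of w
  have hwd : Differentiable ℝ (Function.uncurry w) := hw.differentiable (by simp)
  set W1 : ℝ × ℝ → ℝ := fun p => fderiv ℝ (Function.uncurry w) p ((1 : ℝ), (0 : ℝ)) with hW1def
  set W2 : ℝ × ℝ → ℝ := fun p => fderiv ℝ (Function.uncurry w) p ((0 : ℝ), (1 : ℝ)) with hW2def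
  have hW1 : ∀ s ρ, HasDerivAt (fun r => w r ρ) (W1 (s, ρ)) s := fun s ρ =>
    aux_hasDerivAt_fst (hwd (s, ρ))
  have hW2 : ∀ s ρ, HasDerivAt (w s) (W2 (s, ρ)) ρ := fun s ρ =>
    aux_hasDerivAt_snd (hwd (s, ρ))
  have cW1 : Continuous W1 :=
    (ContinuousLinearMap.apply ℝ ℝ ((1 : ℝ), (0 : ℝ))).continuous.comp
      (hw.continuous_fderiv (by simp))
  have cW2 : Continuous W2 :=
    (ContinuousLinearMap.apply ℝ ℝ ((0 : ℝ), (1 : ℝ))).continuous.comp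
      (hw.continuous_fderiv (by simp))
  have cw : Continuous (Function.uncurry w) := hw.continuous
  have cW1t : Continuous fun ρ => W1 (t, ρ) := cW1.comp (Continuous.prodMk_right t)
  have cW2t : Continuous fun ρ => W2 (t, ρ) := cW2.comp (Continuous.prodMk_right t)
  have cX₂t : Continuous fun ρ => F2 (t, ρ) := hF2.continuous.comp (Continuous.prodMk_right t)
  have cYt : Continuous fun ρ => Y (t, ρ) := cY.comp (Continuous.prodMk_right t)
  -- derivative of η
  have hηd : ∀ ρ, HasDerivAt η (deriv η ρ) ρ := fun ρ =>
    ((hη.differentiable (by simp)) ρ).hasDerivAt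
  have cη : Continuous η := hη.continuous
  have cη' : Continuous (deriv η) := hη.continuous_deriv le_rfl
  -- the t-derivative of the integrand
  set G' : ℝ → ℝ → ℝ := fun s ρ =>
    ((⟪F2 (s, ρ), Y (s, ρ)⟫ / ‖F2 (s, ρ)‖) * w s ρ + ‖F2 (s, ρ)‖ * W1 (s, ρ)) * η ρ
    with hG'def
  have hG : ∀ s ρ, HasDerivAt (fun r => ‖deriv (x r) ρ‖ * w r ρ * η ρ) (G' s ρ) s := by
    intro s ρ
    have hfun : (fun r => ‖deriv (x r) ρ‖ * w r ρ * η ρ)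
        = fun r => ‖F2 (r, ρ)‖ * w r ρ * η ρ := by
      funext r; rw [hX₂eq r ρ]
    rw [hfun]
    exact ((aux_hasDerivAt_norm (hY s ρ) (hne s ρ)).mul (hW1 s ρ)).mul_const (η ρ)
  have cG' : Continuous fun p : ℝ × ℝ => G' p.1 p.2 := by
    apply Continuous.mul _ (cη.comp continuous_snd)
    apply Continuous.add
    · exact ((hF2.continuous.inner cY).div hF2.continuous.norm
        fun p => norm_ne_zero_iff.2 (hne p.1 p.2)).mul cw
    · exact hF2.continuous.norm.mul cW1
  -- dominated differentiation under the integral sign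
  obtain ⟨C, hC⟩ :=
    ((isCompact_Icc.prod isCompact_Icc) :
      IsCompact (Set.Icc (t - 1) (t + 1) ×ˢ Set.Icc (-1 : ℝ) 2)).exists_bound_of_continuousOn
      cG'.continuousOn
  have cF : ∀ s, Continuous fun ρ => ‖deriv (x s) ρ‖ * w s ρ * η ρ := by
    intro s
    have : (fun ρ => ‖deriv (x s) ρ‖ * w s ρ * η ρ)
        = fun ρ => ‖F2 (s, ρ)‖ * w s ρ * η ρ := by funext ρ; rw [hX₂eq s ρ]
    rw [this]
    exact ((hF2.continuous.comp (Continuous.prodMk_right s)).norm.mul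
      (cw.comp (Continuous.prodMk_right s))).mul cη
  have main := intervalIntegral.hasDerivAt_integral_of_dominated_loc_of_deriv_le
    (F := fun s ρ => ‖deriv (x s) ρ‖ * w s ρ * η ρ) (F' := G') (x₀ := t)
    (bound := fun _ => C) (a := (0 : ℝ)) (b := 1) (μ := MeasureTheory.volume)
    (Metric.ball_mem_nhds t one_pos)
    (Filter.Eventually.of_forall fun s => ((cF s).aestronglyMeasurable))
    ((cF t).intervalIntegrable _ _)
    ((cG'.comp (Continuous.prodMk_right t)).aestronglyMeasurable)
    (Filter.Eventually.of_forall fun ρ hρ s hs => by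
      have hρ' : ρ ∈ Set.Icc (-1 : ℝ) 2 := by
        rw [Set.uIoc_of_le (by norm_num : (0:ℝ) ≤ 1)] at hρ
        exact ⟨by linarith [hρ.1], by linarith [hρ.2]⟩
      have hs' : s ∈ Set.Icc (t - 1) (t + 1) := by
        rw [Metric.mem_ball, Real.dist_eq, abs_lt] at hs
        exact ⟨by linarith [hs.1], by linarith [hs.2]⟩
      exact hC (s, ρ) (Set.mem_prod.2 ⟨hs', hρ'⟩))
    (intervalIntegrable_const)
    (Filter.Eventually.of_forall fun ρ _ s _ => hG s ρ)
  -- now identify the value of the derivative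
  have hmain := main.2
  -- tangent vector facts
  have hτfun : τ t = fun ρ => ‖F2 (t, ρ)‖⁻¹ • F2 (t, ρ) := by
    funext ρ; rw [hτ t ρ, hX₂eq t ρ]
  have hXt : ContDiff ℝ (⊤ : ℕ∞) fun ρ => F2 (t, ρ) := hF2.comp (contDiff_const.prodMk contDiff_id)
  have cτ : ContDiff ℝ (⊤ : ℕ∞) (τ t) := by
    rw [hτfun]
    rw [contDiff_iff_contDiffAt]
    intro ρ
    exact ((hXt.contDiffAt.norm ℝ (hne t ρ)).inv
      (norm_ne_zero_iff.2 (hne t ρ))).smul hXt.contDiffAt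
  have hτd : ∀ ρ, HasDerivAt (τ t) (deriv (τ t) ρ) ρ := fun ρ =>
    ((cτ.differentiable (by simp)) ρ).hasDerivAt
  have cdτ : Continuous (deriv (τ t)) := cτ.continuous_deriv (by simp)
  -- ψ and its derivative
  set ψf : ℝ → ℝ := fun ρ => ⟪F1 (t, ρ), τ t ρ⟫ with hψfdef
  set ψ' : ℝ → ℝ := fun ρ => ⟪F1 (t, ρ), deriv (τ t) ρ⟫ + ⟪Y (t, ρ), τ t ρ⟫ with hψ'def
  have hψ : ∀ ρ, HasDerivAt ψf (ψ' ρ) ρ := fun ρ =>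
    HasDerivAt.inner ℝ (hZ ρ) (hτd ρ)
  have cX₁t : Continuous fun ρ => F1 (t, ρ) := hF1.continuous.comp (Continuous.prodMk_right t)
  have cψf : Continuous ψf := cX₁t.inner cτ.continuous
  have cψ' : Continuous ψ' :=
    (cX₁t.inner cdτ).add (cYt.inner cτ.continuous)
  -- periodicity facts at the endpoints
  have hX₂per : F2 (t, 1) = F2 (t, 0) := by
    rw [← hX₂eq t 1, ← hX₂eq t 0]
    exact aux_deriv_periodic (hxper t)
  have hX₁per : F1 (t, 1) = F1 (t, 0) := by
    rw [← hX₁eq t 1, ← hX₁eq t 0]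
    have : (fun r => x r (1 : ℝ)) = fun r => x r 0 := by
      funext r
      have := hxper r 0
      simpa using this
    rw [this]
  have hτper : τ t 1 = τ t 0 := by rw [hτfun]; simp [hX₂per]
  have hwtper : w t 1 = w t 0 := by
    have := hwper t 0; simpa using this
  have hηper' : η 1 = η 0 := by
    have := hηper 0; simpa using this
  -- integration by parts
  set v : ℝ → ℝ := fun ρ => w t ρ * η ρ with hvdef
  set v' : ℝ → ℝ := fun ρ => W2 (t, ρ) * η ρ + w t ρ * deriv η ρ with hv'def
  have hv : ∀ ρ, HasDerivAt v (v' ρ) ρ := fun ρ => (hW2 t ρ).mul (hηd ρ)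
  have cwt : Continuous (w t) := cw.comp (Continuous.prodMk_right t)
  have cv : Continuous v := cwt.mul cη
  have cv' : Continuous v' := (cW2t.mul cη).add (cwt.mul cη')
  have hbp := intervalIntegral.integral_deriv_mul_eq_sub_of_hasDerivAt
    (u := ψf) (v := v) (u' := ψ') (v' := v') (a := (0:ℝ)) (b := 1)
    cψf.continuousOn cv.continuousOn
    (fun ρ _ => hψ ρ) (fun ρ _ => hv ρ)
    (cψ'.intervalIntegrable _ _) (cv'.intervalIntegrable _ _)
  have hboundary : ψf 1 * v 1 - ψf 0 * v 0 = 0 := by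
    rw [hψfdef, hvdef]
    simp only [hX₁per, hτper, hwtper, hηper']
    ring
  rw [hboundary] at hbp
  -- split the integral from integration by parts
  have hsplit : (∫ ρ in (0:ℝ)..1, ψ' ρ * v ρ)
      = - ∫ ρ in (0:ℝ)..1, ψf ρ * v' ρ := by
    have h1 : (∫ ρ in (0:ℝ)..1, ψ' ρ * v ρ + ψf ρ * v' ρ)
        = (∫ ρ in (0:ℝ)..1, ψ' ρ * v ρ) + ∫ ρ in (0:ℝ)..1, ψf ρ * v' ρ :=
      intervalIntegral.integral_add ((cψ'.mul cv).intervalIntegrable _ _)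
        ((cψf.mul cv').intervalIntegrable _ _)
    rw [h1] at hbp
    linarith
  -- the key pointwise identity for the first part of G'
  have hpoint : ∀ ρ, (⟪F2 (t, ρ), Y (t, ρ)⟫ / ‖F2 (t, ρ)‖) * w t ρ * η ρ
      = ψ' ρ * v ρ - ⟪F1 (t, ρ), deriv (τ t) ρ⟫ * v ρ := by
    intro ρ
    have hτρ : τ t ρ = ‖F2 (t, ρ)‖⁻¹ • F2 (t, ρ) := by rw [hτfun]
    have : ⟪Y (t, ρ), τ t ρ⟫ = ⟪F2 (t, ρ), Y (t, ρ)⟫ / ‖F2 (t, ρ)‖ := by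
      rw [hτρ, real_inner_smul_right, real_inner_comm]
      rw [div_eq_inv_mul]
    rw [hψ'def, hvdef]
    simp only []
    rw [this]
    ring
  -- rewrite all four target integrals
  have hInt1 : (∫ ρ in (0:ℝ)..1, ‖deriv (x t) ρ‖ * deriv (fun s => w s ρ) t * η ρ)
      = ∫ ρ in (0:ℝ)..1, ‖F2 (t, ρ)‖ * W1 (t, ρ) * η ρ := by
    apply intervalIntegral.integral_congr
    intro ρ _
    beta_reduce
    rw [hX₂eq t ρ, (hW1 t ρ).deriv]
  have hInt2 : (∫ ρ in (0:ℝ)..1, ⟪deriv (fun s => x s ρ) t, τ t ρ⟫ * deriv (w t) ρ * η ρ)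
      = ∫ ρ in (0:ℝ)..1, ψf ρ * (W2 (t, ρ) * η ρ) := by
    apply intervalIntegral.integral_congr
    intro ρ _
    beta_reduce
    rw [hX₁eq t ρ, (hW2 t ρ).deriv, hψfdef]
    ring
  have hInt3 : (∫ ρ in (0:ℝ)..1, ⟪deriv (fun s => x s ρ) t, τ t ρ⟫ * w t ρ * deriv η ρ)
      = ∫ ρ in (0:ℝ)..1, ψf ρ * (w t ρ * deriv η ρ) := by
    apply intervalIntegral.integral_congr
    intro ρ _
    beta_reduce
    rw [hX₁eq t ρ, hψfdef]
    ring
  have hInt4 : (∫ ρ in (0:ℝ)..1,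
        κ t ρ * ⟪deriv (fun s => x s ρ) t, ν t ρ⟫ * w t ρ * η ρ * ‖deriv (x t) ρ‖)
      = ∫ ρ in (0:ℝ)..1, ⟪F1 (t, ρ), deriv (τ t) ρ⟫ * v ρ := by
    apply intervalIntegral.integral_congr
    intro ρ _
    beta_reduce
    have hd : deriv (τ t) ρ = (κ t ρ * ‖deriv (x t) ρ‖) • ν t ρ := hκ t ρ
    rw [hX₁eq t ρ, hd, real_inner_smul_right, hvdef, hX₂eq t ρ]
    ring
  -- split ψf v' integral
  have hsplit2 : (∫ ρ in (0:ℝ)..1, ψf ρ * v' ρ)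
      = (∫ ρ in (0:ℝ)..1, ψf ρ * (W2 (t, ρ) * η ρ))
        + ∫ ρ in (0:ℝ)..1, ψf ρ * (w t ρ * deriv η ρ) := by
    rw [← intervalIntegral.integral_add (f := fun ρ => ψf ρ * (W2 (t, ρ) * η ρ))
      (g := fun ρ => ψf ρ * (w t ρ * deriv η ρ))
      ((cψf.mul (cW2t.mul cη)).intervalIntegrable _ _)
      ((cψf.mul (cwt.mul cη')).intervalIntegrable _ _)]
    apply intervalIntegral.integral_congr
    intro ρ _
    beta_reduce
    rw [hv'def]
    ring
  -- value of ∫ G' t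
  have hval : (∫ ρ in (0:ℝ)..1, G' t ρ)
      = (∫ ρ in (0:ℝ)..1, ‖deriv (x t) ρ‖ * deriv (fun s => w s ρ) t * η ρ)
        - (∫ ρ in (0:ℝ)..1, ⟪deriv (fun s => x s ρ) t, τ t ρ⟫ * deriv (w t) ρ * η ρ)
        - (∫ ρ in (0:ℝ)..1, ⟪deriv (fun s => x s ρ) t, τ t ρ⟫ * w t ρ * deriv η ρ)
        - (∫ ρ in (0:ℝ)..1,
            κ t ρ * ⟪deriv (fun s => x s ρ) t, ν t ρ⟫ * w t ρ * η ρ * ‖deriv (x t) ρ‖) := by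
    have hGsplit : (∫ ρ in (0:ℝ)..1, G' t ρ)
        = (∫ ρ in (0:ℝ)..1, (ψ' ρ * v ρ - ⟪F1 (t, ρ), deriv (τ t) ρ⟫ * v ρ))
          + ∫ ρ in (0:ℝ)..1, ‖F2 (t, ρ)‖ * W1 (t, ρ) * η ρ := by
      rw [← intervalIntegral.integral_add
        (f := fun ρ => ψ' ρ * v ρ - ⟪F1 (t, ρ), deriv (τ t) ρ⟫ * v ρ)
        (g := fun ρ => ‖F2 (t, ρ)‖ * W1 (t, ρ) * η ρ)
        (((cψ'.mul cv).sub ((cX₁t.inner cdτ).mul cv)).intervalIntegrable _ _)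
        (((cX₂t.norm.mul cW1t).mul cη).intervalIntegrable _ _)]
      apply intervalIntegral.integral_congr
      intro ρ _
      beta_reduce
      rw [hG'def, ← hpoint ρ]
      ring
    rw [hGsplit]
    rw [intervalIntegral.integral_sub (f := fun ρ => ψ' ρ * v ρ)
      (g := fun ρ => ⟪F1 (t, ρ), deriv (τ t) ρ⟫ * v ρ) ((cψ'.mul cv).intervalIntegrable _ _)
      (((cX₁t.inner cdτ).mul cv).intervalIntegrable _ _)]
    rw [hsplit, hInt1, hInt2, hInt3, hInt4, hsplit2]
    ring
  rw [← hval]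
  exact hmain
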